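/- One-step lossless speculative sampling: let p and P be probability distributions on a finite set X with the support condition (p(x) > 0 implies P(x) > 0), let γ = Σ_x min(p(x), P(x)), and assume γ < 1. Define the output distribution Z(a) = P(a)·min(1, p(a)/P(a)) + (1 − γ)·p_res(a), where p_res(a) = (p(a) − min(p(a), P(a)))/(1 − γ). Then Z(a) = p(a) for all a. -/
import Mathlib

theorem one_step_lossless_speculative_sampling
    {X : Type*} [Fintype X] (p P : X → ℝ)
    (hp0 : ∀ x, 0 ≤ p x) (hP0 : ∀ x, 0 ≤ P x)
    (hp1 : ∑ x, p x = 1) (hP1 : ∑ x, P x = 1)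
    (hsupp : ∀ x, 0 < p x → 0 < P x)
    (hγ : ∑ x, min (p x) (P x) < 1) (a : X) :
    P a * min 1 (p a / P a) +
      (1 - ∑ x, min (p x) (P x)) *
        ((p a - min (p a) (P a)) / (1 - ∑ x, min (p x) (P x))) = p a := by
  have hne : (1 - ∑ x, min (p x) (P x)) ≠ 0 := by linarith
  rw [mul_div_cancel₀ _ hne]
  have h1 : P a * min 1 (p a / P a) = min (P a) (p a) := by
    rcases eq_or_lt_of_le (hP0 a) with h | h
    · have hpa : p a = 0 := by
        by_contra hc
        have := hsupp a (lt_of_le_of_ne (hp0 a) (Ne.symm hc))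
        linarith
      simp [← h, hpa]
    · rw [mul_min_of_nonneg _ _ h.le, mul_one, mul_div_cancel₀ _ h.ne']
  rw [h1, min_comm]
  ring
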